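/- arXiv:math/0412055 — 2 statements merged into one kernel-verified Lean document; each statement's English description precedes it below -/
import Mathlib

section
/- A minimal monomial sequence f_1,...,f_n is an unconditional proper sequence (every permutation is a proper sequence) if and only if there exist monomials d, g_1,...,g_n with f_i = d·g_i for all i and g_1,...,g_n pairwise coprime. -/
/-!
Let `D = a_i ⊓ a_j`. Properness of an ordering that starts with `f_i, f_j, f_k`, applied to the
Koszul cycle `(x^(a_j - D), -x^(a_i - D))`, forces `x^(a_j) ∣ f_k · x^(a_j - D)`, that is
`D ≤ a_k`; hence every pairwise gcd divides every term and all pairwise gcds coincide.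
Conversely, pairwise coprime monomials form a weakly regular sequence in every order, so their
first Koszul homology vanishes, and multiplying a proper sequence by a common nonzero factor keeps
it proper.
-/

open MvPolynomial

/-- `f_0,…,f_{n-1}` (0-based) is a proper sequence if
`f_r · H_1(f_0,…,f_{r-1}; R) = 0` for every `r`: every Koszul 1-cycle `v`
supported on the first `r` elements, multiplied by `f_r`, lies in the
submodule generated by the Koszul boundaries `f_j e_i - f_i e_j`
(`i < j < r`). -/
def IsProperSequence {R : Type*} [CommRing R] {n : ℕ} (f : Fin n → R) : Prop :=
  ∀ r : Fin n, ∀ v : Fin n → R,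
    (∀ j, r ≤ j → v j = 0) → (∑ j, v j * f j = 0) →
      (fun j => f r * v j) ∈ Submodule.span R
        {w : Fin n → R | ∃ i j : Fin n, i < j ∧ j < r ∧
          w = Pi.single i (f j) - Pi.single j (f i)}

section Koszul

variable {R : Type*} [CommRing R] {n : ℕ}

/-- The Koszul 1-cycles and 1-boundaries of `f_0, …, f_(k-1)`, sitting inside `R^n`. -/
def koszulCycles (f : Fin n → R) (k : ℕ) : Submodule R (Fin n → R) where
  carrier := {v | (∀ j : Fin n, k ≤ j → v j = 0) ∧ ∑ j, v j * f j = 0}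
  add_mem' {v w} hv hw :=
    ⟨fun j hj => by simp [hv.1 j hj, hw.1 j hj],
      by simp only [Pi.add_apply, add_mul, Finset.sum_add_distrib, hv.2, hw.2, add_zero]⟩
  zero_mem' := ⟨fun _ _ => rfl, by simp⟩
  smul_mem' c v hv :=
    ⟨fun j hj => by simp [hv.1 j hj],
      by simp only [Pi.smul_apply, smul_eq_mul, mul_assoc, ← Finset.mul_sum, hv.2, mul_zero]⟩

def koszulBoundaries (f : Fin n → R) (k : ℕ) : Submodule R (Fin n → R) :=
  Submodule.span R
    {w | ∃ i j : Fin n, i < j ∧ (j : ℕ) < k ∧ w = Pi.single i (f j) - Pi.single j (f i)}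

theorem isProperSequence_iff {f : Fin n → R} :
    IsProperSequence f ↔ ∀ r : Fin n, ∀ v ∈ koszulCycles f r, f r • v ∈ koszulBoundaries f r :=
  ⟨fun h r v hv => h r v hv.1 hv.2, fun h r v hsupp hcyc => h r v ⟨hsupp, hcyc⟩⟩

theorem koszulBoundaries_mono {f : Fin n → R} {k l : ℕ} (hkl : k ≤ l) :
    koszulBoundaries f k ≤ koszulBoundaries f l :=
  Submodule.span_mono fun _ ⟨i, j, hij, hjk, hw⟩ => ⟨i, j, hij, hjk.trans_le hkl, hw⟩

theorem koszulBoundaries_le_koszulCycles (f : Fin n → R) (k : ℕ) :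
    koszulBoundaries f k ≤ koszulCycles f k := by
  refine Submodule.span_le.mpr ?_
  rintro _ ⟨i, j, hij, hjk, rfl⟩
  refine ⟨fun l hl => ?_, ?_⟩
  · have hil : i ≠ l := by rw [Fin.ne_iff_vne]; omega
    have hjl : j ≠ l := by rw [Fin.ne_iff_vne]; omega
    simp [hil.symm, hjl.symm]
  · simp only [Pi.sub_apply, sub_mul, Finset.sum_sub_distrib, Pi.single_apply, ite_mul, zero_mul,
      Finset.sum_ite_eq', Finset.mem_univ, if_true]
    exact sub_eq_zero.mpr (mul_comm _ _)

/-- `hreg` says that `f t` is a nonzerodivisor on `R ⧸ (f j : j < t)`. In the inductive step it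
puts the last coefficient of a cycle into the ideal of the earlier terms, so that subtracting a
boundary shortens the cycle. -/
theorem koszulCycles_le_koszulBoundaries_of_regular {f : Fin n → R}
    (hreg : ∀ t : Fin n, ∀ p : R,
      f t * p ∈ Ideal.span (f '' Set.Iio t) → p ∈ Ideal.span (f '' Set.Iio t)) :
    ∀ k, koszulCycles f k ≤ koszulBoundaries f k := by
  intro k
  induction k with
  | zero =>
    intro v hv
    obtain rfl : v = 0 := funext fun j => hv.1 j (Nat.zero_le _)
    exact zero_mem _
  | succ k ih =>
    intro v hv
    by_cases hkn : n ≤ k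
    · exact koszulBoundaries_mono k.le_succ (ih ⟨fun j _ => hv.1 j (by omega), hv.2⟩)
    set t : Fin n := ⟨k, by omega⟩
    have hspan : Ideal.span (f '' Set.Iio t) ≤
        (koszulBoundaries f (k + 1)).map (LinearMap.proj t) := by
      refine Submodule.span_le.mpr ?_
      rintro _ ⟨j, hj, rfl⟩
      refine ⟨Pi.single t (f j) - Pi.single j (f t), ?_, by simp [(Set.mem_Iio.mp hj).ne']⟩
      rw [← neg_sub]
      exact neg_mem (Submodule.subset_span ⟨j, t, hj, k.lt_succ_self, rfl⟩)
    have hvt : v t ∈ Ideal.span (f '' Set.Iio t) := by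
      refine hreg t _ ?_
      have hrest : ∑ j ∈ {t}ᶜ, v j * f j ∈ Ideal.span (f '' Set.Iio t) := by
        refine Ideal.sum_mem _ fun j hj => ?_
        rcases lt_or_gt_of_ne (Finset.mem_compl.mp hj ∘ Finset.mem_singleton.mpr) with hjt | hjt
        · exact Ideal.mul_mem_left _ _ (Ideal.subset_span ⟨j, hjt, rfl⟩)
        · rw [hv.1 j hjt, zero_mul]
          exact zero_mem _
      rw [mul_comm, ← Submodule.add_mem_iff_left _ hrest,
        ← Fintype.sum_eq_add_sum_compl t fun j => v j * f j, hv.2]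
      exact zero_mem _
    obtain ⟨w, hw, hwt⟩ := hspan hvt
    have hvw : v - w ∈ koszulCycles f k := by
      have h := sub_mem hv (koszulBoundaries_le_koszulCycles f _ hw)
      refine ⟨fun j hj => ?_, h.2⟩
      rcases hj.eq_or_lt with hj | hj
      · obtain rfl : j = t := Fin.ext hj.symm
        exact sub_eq_zero.mpr hwt.symm
      · exact h.1 j hj
    simpa using add_mem (koszulBoundaries_mono k.le_succ (ih hvw)) hw

theorem isProperSequence_of_regular {f : Fin n → R}
    (hreg : ∀ t : Fin n, ∀ p : R,
      f t * p ∈ Ideal.span (f '' Set.Iio t) → p ∈ Ideal.span (f '' Set.Iio t)) :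
    IsProperSequence f :=
  isProperSequence_iff.mpr fun r _ hv =>
    Submodule.smul_mem _ _ (koszulCycles_le_koszulBoundaries_of_regular hreg r hv)

theorem smul_mem_koszulBoundaries_mul_left {f : Fin n → R} {k : ℕ} (c : R) {w : Fin n → R}
    (hw : w ∈ koszulBoundaries f k) : c • w ∈ koszulBoundaries (fun i => c * f i) k := by
  refine Submodule.span_induction (fun w hw => ?_) (by simp)
    (fun _ _ _ _ h₁ h₂ => by rw [smul_add]; exact add_mem h₁ h₂)
    (fun a _ _ h => by rw [smul_comm]; exact Submodule.smul_mem _ a h) hw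
  obtain ⟨i, j, hij, hjk, rfl⟩ := hw
  refine Submodule.subset_span ⟨i, j, hij, hjk, ?_⟩
  simp only [smul_sub, ← Pi.single_smul', smul_eq_mul]

theorem IsProperSequence.mul_left [IsDomain R] {f : Fin n → R} (hf : IsProperSequence f)
    {c : R} (hc : c ≠ 0) : IsProperSequence fun i => c * f i := by
  rw [isProperSequence_iff] at hf ⊢
  intro r v hv
  have hv' : v ∈ koszulCycles f r := by
    refine ⟨hv.1, (mul_eq_zero.mp ?_).resolve_left hc⟩
    simpa only [Finset.mul_sum, mul_left_comm c] using hv.2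
  rw [mul_smul]
  exact smul_mem_koszulBoundaries_mul_left c (hf r v hv')

theorem IsProperSequence.dvd_mul_of_mul_eq_mul {f : Fin n → R} (hf : IsProperSequence f)
    (h2 : 2 < n) {p q : R} (hpq : p * f ⟨0, by omega⟩ = q * f ⟨1, by omega⟩) :
    f ⟨1, by omega⟩ ∣ f ⟨2, h2⟩ * p := by
  set z₀ : Fin n := ⟨0, by omega⟩
  set z₁ : Fin n := ⟨1, by omega⟩
  have h01 : z₀ ≠ z₁ := by simp [z₀, z₁, Fin.ext_iff]
  have hv : Pi.single z₀ p - Pi.single z₁ q ∈ koszulCycles f 2 := by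
    refine ⟨fun j hj => ?_, ?_⟩
    · have hj₀ : j ≠ z₀ := by simp [z₀, Fin.ext_iff]; omega
      have hj₁ : j ≠ z₁ := by simp [z₁, Fin.ext_iff]; omega
      simp [hj₀, hj₁]
    · simp [sub_mul, Finset.sum_sub_distrib, Pi.single_apply, hpq]
  have hB : koszulBoundaries f 2 ≤ R ∙ (Pi.single z₀ (f z₁) - Pi.single z₁ (f z₀)) := by
    refine Submodule.span_le.mpr ?_
    rintro _ ⟨i, j, hij, hj2, rfl⟩
    rw [Fin.lt_def] at hij
    obtain rfl : i = z₀ := Fin.ext (show (i : ℕ) = 0 by omega)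
    obtain rfl : j = z₁ := Fin.ext (show (j : ℕ) = 1 by omega)
    exact Submodule.mem_span_singleton_self _
  obtain ⟨c, hc⟩ := Submodule.mem_span_singleton.mp (hB (isProperSequence_iff.mp hf ⟨2, h2⟩ _ hv))
  refine ⟨c, ?_⟩
  simpa [h01, mul_comm] using (congrFun hc z₀).symm

end Koszul

section Monomial

variable {σ K : Type*}

theorem mem_ideal_span_monomial_of_monomial_mul_mem [CommSemiring K] {s : Set (σ →₀ ℕ)}
    {b : σ →₀ ℕ} (hb : ∀ a ∈ s, a ⊓ b = 0) {p : MvPolynomial σ K}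
    (h : monomial b 1 * p ∈ Ideal.span ((fun a => monomial a (1 : K)) '' s)) :
    p ∈ Ideal.span ((fun a => monomial a (1 : K)) '' s) := by
  rw [mem_ideal_span_monomial_image] at h ⊢
  intro u hu
  obtain ⟨a, ha, hle⟩ := h (b + u) (by simpa [mem_support_iff, coeff_monomial_mul] using hu)
  refine ⟨a, ha, fun x => ?_⟩
  have hle_x := hle x
  have hcop_x := DFunLike.congr_fun (hb a ha) x
  simp only [Finsupp.inf_apply, Finsupp.coe_add, Pi.add_apply, Finsupp.coe_zero,
    Pi.zero_apply] at hle_x hcop_x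
  omega

theorem isProperSequence_monomial [CommRing K] {n : ℕ} {g : Fin n → σ →₀ ℕ}
    (hg : Pairwise fun i j => g i ⊓ g j = 0) :
    IsProperSequence fun i => monomial (g i) (1 : K) := by
  refine isProperSequence_of_regular fun t p hp => ?_
  rw [← Set.image_image (fun a => monomial a (1 : K)) g] at hp ⊢
  refine mem_ideal_span_monomial_of_monomial_mul_mem ?_ hp
  rintro _ ⟨j, hj, rfl⟩
  exact hg (Set.mem_Iio.mp hj).ne

theorem inf_le_of_isProperSequence_monomial [CommRing K] [Nontrivial K] {n : ℕ}
    {a : Fin n → σ →₀ ℕ} (h : IsProperSequence fun i => monomial (a i) (1 : K)) (h2 : 2 < n) :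
    a ⟨0, by omega⟩ ⊓ a ⟨1, by omega⟩ ≤ a ⟨2, h2⟩ := by
  set a₀ := a ⟨0, by omega⟩
  set a₁ := a ⟨1, by omega⟩
  have hdvd := h.dvd_mul_of_mul_eq_mul h2
    (p := monomial (a₁ - a₀ ⊓ a₁) 1) (q := monomial (a₀ - a₀ ⊓ a₁) 1) (by
      simp only [monomial_mul, one_mul]
      rw [tsub_add_eq_add_tsub inf_le_right, tsub_add_eq_add_tsub inf_le_left, add_comm])
  rw [monomial_mul, one_mul, monomial_dvd_monomial] at hdvd
  have ha₁ : a₁ ≤ (a₁ - a₀ ⊓ a₁) + a ⟨2, h2⟩ := by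
    rw [add_comm]
    exact hdvd.1.resolve_left one_ne_zero
  calc a₀ ⊓ a₁ = a₁ - (a₁ - a₀ ⊓ a₁) := (tsub_tsub_cancel_of_le inf_le_right).symm
    _ ≤ a ⟨2, h2⟩ := tsub_le_iff_left.mpr ha₁

theorem inf_le_of_forall_isProperSequence_monomial [CommRing K] [Nontrivial K] {n : ℕ}
    {a : Fin n → σ →₀ ℕ}
    (h : ∀ τ : Equiv.Perm (Fin n), IsProperSequence ((fun i => monomial (a i) (1 : K)) ∘ τ))
    {i j k : Fin n} (hij : i ≠ j) (hik : i ≠ k) (hjk : j ≠ k) : a i ⊓ a j ≤ a k := by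
  have hinj : Function.Injective ![i, j, k] := by
    intro x y
    fin_cases x <;> fin_cases y <;> simp [hij, hik, hjk, hij.symm, hik.symm, hjk.symm]
  have h3 : 3 ≤ n := by simpa using Fintype.card_le_of_injective _ hinj
  obtain ⟨τ, hτ⟩ :=
    Equiv.Perm.exists_extending_pair (Fin.castLE h3) _ (Fin.castLE_injective h3) hinj
  have hτ₀ : τ ⟨0, by omega⟩ = i := hτ 0
  have hτ₁ : τ ⟨1, by omega⟩ = j := hτ 1
  have hτ₂ : τ ⟨2, h3⟩ = k := hτ 2
  simpa only [Function.comp_apply, hτ₀, hτ₁, hτ₂] using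
    inf_le_of_isProperSequence_monomial (a := a ∘ τ) (h τ) h3

end Monomial

theorem exists_forall_inf_eq {ι α : Type*} [SemilatticeInf α] [OrderBot α] {a : ι → α}
    (h : ∀ i j k, i ≠ j → i ≠ k → j ≠ k → a i ⊓ a j ≤ a k) :
    ∃ d, (∀ i, d ≤ a i) ∧ ∀ i j, i ≠ j → a i ⊓ a j = d := by
  have hle : ∀ i j k, i ≠ j → a i ⊓ a j ≤ a k := by
    intro i j k hij
    by_cases hki : k = i
    · exact hki ▸ inf_le_left
    by_cases hkj : k = j
    · exact hkj ▸ inf_le_right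
    exact h i j k hij (Ne.symm hki) (Ne.symm hkj)
  by_cases hι : ∃ i₀ i₁ : ι, i₀ ≠ i₁
  · obtain ⟨i₀, i₁, h01⟩ := hι
    refine ⟨a i₀ ⊓ a i₁, fun k => hle i₀ i₁ k h01, fun i j hij => le_antisymm ?_ ?_⟩
    · exact le_inf (hle i j i₀ hij) (hle i j i₁ hij)
    · exact le_inf (hle i₀ i₁ i h01) (hle i₀ i₁ j h01)
  · simp only [not_exists, not_not] at hι
    exact ⟨⊥, fun _ => bot_le, fun i j hij => absurd (hι i j) hij⟩

theorem Finsupp.tsub_inf_tsub_eq_zero {σ : Type*} {d x y : σ →₀ ℕ} (hx : d ≤ x) (hy : d ≤ y)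
    (hxy : x ⊓ y = d) : (x - d) ⊓ (y - d) = 0 := by
  ext s
  have hx_s := hx s
  have hy_s := hy s
  have hxy_s := DFunLike.congr_fun hxy s
  simp only [Finsupp.inf_apply, Finsupp.coe_tsub, Pi.sub_apply, Finsupp.coe_zero,
    Pi.zero_apply] at hxy_s ⊢
  omega

theorem stmt_9_general {K : Type*} [Field K] {m n : ℕ} (a : Fin n → (Fin m →₀ ℕ))
    (f : Fin n → MvPolynomial (Fin m) K) (hf : ∀ i, f i = monomial (a i) 1) :
    (∀ σ : Equiv.Perm (Fin n), IsProperSequence (f ∘ σ)) ↔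
      ∃ (d : Fin m →₀ ℕ) (g : Fin n → (Fin m →₀ ℕ)),
        (∀ i, f i = monomial d 1 * monomial (g i) 1) ∧
          ∀ i j : Fin n, i ≠ j → g i ⊓ g j = 0 := by
  obtain rfl : f = fun i => monomial (a i) 1 := funext hf
  constructor
  · intro hproper
    obtain ⟨d, hd, hinf⟩ := exists_forall_inf_eq fun _ _ _ =>
      inf_le_of_forall_isProperSequence_monomial hproper
    refine ⟨d, fun i => a i - d, fun i => ?_,
      fun i j hij => Finsupp.tsub_inf_tsub_eq_zero (hd i) (hd j) (hinf i j hij)⟩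
    rw [monomial_mul, one_mul, add_tsub_cancel_of_le (hd i)]
  · rintro ⟨d, g, hfg, hg⟩ σ
    have hσ : (fun i => monomial (a i) (1 : K)) ∘ σ =
        fun i => monomial d 1 * monomial (g (σ i)) 1 := funext fun i => hfg (σ i)
    rw [hσ]
    exact (isProperSequence_monomial (Pairwise.comp_of_injective hg σ.injective)).mul_left
      (monomial_eq_zero.not.mpr one_ne_zero)

/-- A minimal monomial sequence `f_1,…,f_n` is an unconditional proper sequence
(every permutation is a proper sequence) iff there exist monomials
`d, g_1,…,g_n` with `f_i = d·g_i` for all `i` and `g_1,…,g_n` pairwise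
coprime. -/
theorem stmt_9 {K : Type*} [Field K] {m n : ℕ} (a : Fin n → (Fin m →₀ ℕ))
    (f : Fin n → MvPolynomial (Fin m) K) (hf : ∀ i, f i = monomial (a i) 1)
    (hmin : ∀ i j : Fin n, i ≠ j → ¬f i ∣ f j) :
    (∀ σ : Equiv.Perm (Fin n), IsProperSequence (f ∘ σ)) ↔
      ∃ (d : Fin m →₀ ℕ) (g : Fin n → (Fin m →₀ ℕ)),
        (∀ i, f i = monomial d 1 * monomial (g i) 1) ∧
          ∀ i j : Fin n, i ≠ j → g i ⊓ g j = 0 :=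
  stmt_9_general a f hf
end

section
/- A minimal monomial sequence f_1,...,f_n is an unconditional d-sequence if and only if there exist monomials d, g_1,...,g_n with f_i = d·g_i, gcd(d, g_i) = 1 for all i, and g_1,...,g_n pairwise coprime. -/
/-!
For monomials every colon ideal is again monomial, so each d-sequence condition becomes an
inequality between exponent vectors. Putting `p`, `i`, `k` in the first positions of an ordering
shows that unconditionality amounts to: for every variable `x`, if `x ∣ f_i` then
`deg_x f_p ≤ deg_x f_k` whenever `p ∉ {i, k}`. In each variable this forces all exponents to
equal their minimum except at most one, and all of them when the minimum is positive; hence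
`d = gcd(f_1, …, f_n)` and `g_i = f_i / d` give the factorization, and conversely.
-/

open MvPolynomial

/-- A sequence `f_0,…,f_{n-1}` (0-based) is a d-sequence if it minimally
generates its ideal (for monomials: no `f_i` divides `f_j` for `i ≠ j`) and
`(f_0,…,f_{i-1}) : (f_i f_k) = (f_0,…,f_{i-1}) : f_k` for all `i ≤ k`. -/
def IsDSequence {R : Type*} [CommRing R] {n : ℕ} (f : Fin n → R) : Prop :=
  (∀ i j : Fin n, i ≠ j → ¬f i ∣ f j) ∧
    ∀ i k : Fin n, i ≤ k →
      (Ideal.span (f '' {j | j < i})).colon (Ideal.span {f i * f k}) =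
        (Ideal.span (f '' {j | j < i})).colon (Ideal.span {f k})

namespace MvPolynomial

variable {R σ : Type*}

theorem support_mul_monomial_one [CommSemiring R] (r : MvPolynomial σ R) (c : σ →₀ ℕ) :
    (r * monomial c 1).support = r.support.map (addRightEmbedding c) :=
  AddMonoidAlgebra.support_coeff_mul_single r 1 (by simp) c

theorem mem_colon_span_monomial_image [CommSemiring R] (S : Set (σ →₀ ℕ)) (c : σ →₀ ℕ)
    (r : MvPolynomial σ R) :
    r ∈ (Ideal.span ((fun s => monomial s (1 : R)) '' S)).colon
        (Ideal.span {monomial c (1 : R)}) ↔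
      ∀ s ∈ r.support, ∃ b ∈ S, b ≤ s + c := by
  rw [Submodule.mem_colon_span_singleton, smul_eq_mul, mem_ideal_span_monomial_image,
    support_mul_monomial_one, Finset.forall_mem_map]
  rfl

theorem colon_span_monomial_add_eq_iff [CommSemiring R] [Nontrivial R] (S : Set (σ →₀ ℕ))
    (u v : σ →₀ ℕ) :
    (Ideal.span ((fun s => monomial s (1 : R)) '' S)).colon
          (Ideal.span {monomial (u + v) (1 : R)}) =
        (Ideal.span ((fun s => monomial s (1 : R)) '' S)).colon
          (Ideal.span {monomial v (1 : R)}) ↔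
      ∀ b ∈ S, ∃ b' ∈ S, b' ≤ b - (u + v) + v := by
  constructor
  · intro h b hb
    have hquot : monomial (b - (u + v)) (1 : R) ∈
        (Ideal.span ((fun s => monomial s (1 : R)) '' S)).colon
          (Ideal.span {monomial (u + v) (1 : R)}) := by
      rw [mem_colon_span_monomial_image]
      intro s hs
      rw [Finset.mem_singleton.mp (support_monomial_subset hs)]
      exact ⟨b, hb, le_tsub_add⟩
    rw [h, mem_colon_span_monomial_image] at hquot
    classical
    exact hquot _ (by rw [mem_support_iff, coeff_monomial, if_pos rfl]; exact one_ne_zero)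
  · intro h
    ext r
    simp only [mem_colon_span_monomial_image]
    refine ⟨fun hr s hs => ?_, fun hr s hs => ?_⟩
    · obtain ⟨b, hb, hbs⟩ := hr s hs
      obtain ⟨b', hb', hb'b⟩ := h b hb
      exact ⟨b', hb', hb'b.trans (add_le_add_left (tsub_le_iff_right.mpr hbs) v)⟩
    · obtain ⟨b, hb, hbs⟩ := hr s hs
      exact ⟨b, hb, hbs.trans (by rw [add_comm u v, ← add_assoc]; exact le_self_add)⟩

end MvPolynomial

theorem Finsupp.le_tsub_add_iff {σ : Type*} (a b c : σ →₀ ℕ) :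
    a ≤ a - (b + c) + c ↔ ∀ x, b x = 0 ∨ a x ≤ c x := by
  simp only [Finsupp.le_def, Finsupp.add_apply, Finsupp.tsub_apply]
  exact forall_congr' fun x => by omega

section Monomial

variable {ι σ : Type*}

/-- Exponent form, variable by variable, of the criterion `gcd(f_p, f_i) ∣ f_k` and
`gcd(f_p, f_i) = gcd(f_p, f_i²)` imposed on every ordering of the sequence `f_i = x ^ a i`. -/
def IsDegreeDominated (a : ι → σ →₀ ℕ) : Prop :=
  ∀ p i k, p ≠ i → p ≠ k → ∀ x, a i x = 0 ∨ a p x ≤ a k x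

theorem IsDegreeDominated.comp {κ : Type*} {a : ι → σ →₀ ℕ} (h : IsDegreeDominated a)
    {τ : κ → ι} (hτ : Function.Injective τ) : IsDegreeDominated (a ∘ τ) :=
  fun _ _ _ hpi hpk => h _ _ _ (hτ.ne hpi) (hτ.ne hpk)

theorem isDegreeDominated_of_eq_add {a : ι → σ →₀ ℕ} {d : σ →₀ ℕ} {g : ι → σ →₀ ℕ}
    (ha : ∀ i, a i = d + g i) (hdg : ∀ i, d ⊓ g i = 0) (hg : ∀ i j, i ≠ j → g i ⊓ g j = 0) :
    IsDegreeDominated a := by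
  intro p i k hpi _ x
  have hdgp := DFunLike.congr_fun (hdg p) x
  have hgpi := DFunLike.congr_fun (hg p i hpi) x
  simp only [Finsupp.inf_apply, Finsupp.zero_apply] at hdgp hgpi
  simp only [ha, Finsupp.add_apply]
  omega

theorem IsDegreeDominated.exists_eq_add [Finite ι] {a : ι → σ →₀ ℕ} (h : IsDegreeDominated a) :
    ∃ (d : σ →₀ ℕ) (g : ι → σ →₀ ℕ),
      (∀ i, a i = d + g i) ∧ (∀ i, d ⊓ g i = 0) ∧ ∀ i j, i ≠ j → g i ⊓ g j = 0 := by
  cases isEmpty_or_nonempty ι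
  · exact ⟨0, 0, isEmptyElim, isEmptyElim, isEmptyElim⟩
  have := Fintype.ofFinite ι
  set d := Finset.univ.inf' Finset.univ_nonempty a
  have hd_le : ∀ i, d ≤ a i := fun i => Finset.inf'_le a (Finset.mem_univ i)
  have hd_eq : ∀ x, ∃ k, d x = a k x := by
    intro x
    obtain ⟨k, -, hk⟩ := Finset.exists_mem_eq_inf' Finset.univ_nonempty (fun i => a i x)
    refine ⟨k, .trans ?_ hk⟩
    exact Finset.apply_inf'_eq_inf'_comp _ (fun g : σ →₀ ℕ => g x) fun _ _ => Finsupp.inf_apply ..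
  refine ⟨d, fun i => a i - d, fun i => (add_tsub_cancel_of_le (hd_le i)).symm,
    fun i => ?_, fun i j hij => ?_⟩ <;> ext x <;> obtain ⟨k, hk⟩ := hd_eq x <;>
    simp only [Finsupp.tsub_apply, Finsupp.inf_apply, Finsupp.zero_apply]
  · have hdi := hd_le i x
    rcases eq_or_ne i k with rfl | hik
    · omega
    · have := h i k k hik hik x
      omega
  · have hdi := hd_le i x
    have hdj := hd_le j x
    by_contra hpos
    have hik : i ≠ k := by rintro rfl; omega
    have hjk : j ≠ k := by rintro rfl; omega
    have := h i j k hij hik x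
    omega

end Monomial

theorem Fin.exists_perm_lt_iff_apply_eq_of_injective {n r : ℕ} (v : Fin (r + 2) → Fin n)
    (hv : Function.Injective v) (K : Fin (r + 2)) (hK : 1 ≤ K) :
    ∃ (τ : Equiv.Perm (Fin n)) (j K' : Fin n),
      j ≤ K' ∧ τ j = v 1 ∧ τ K' = v K ∧ ∀ q, q < j ↔ τ q = v 0 := by
  have hn : r + 2 ≤ n := by simpa using Fintype.card_le_of_injective v hv
  obtain ⟨τ, hτ⟩ :=
    Equiv.Perm.exists_extending_pair (Fin.castLE hn) v (Fin.castLE_injective hn) hv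
  refine ⟨τ, Fin.castLE hn 1, Fin.castLE hn K, (Fin.castLE_le_castLE_iff hn).mpr hK, hτ 1, hτ K,
    fun q => ?_⟩
  rw [← hτ 0, τ.injective.eq_iff, Fin.lt_def, Fin.ext_iff]
  simp

theorem Fin.exists_perm_lt_iff_apply_eq {n : ℕ} {p i k : Fin n} (hpi : p ≠ i) (hpk : p ≠ k) :
    ∃ (τ : Equiv.Perm (Fin n)) (j K : Fin n),
      j ≤ K ∧ τ j = i ∧ τ K = k ∧ ∀ q, q < j ↔ τ q = p := by
  rcases eq_or_ne i k with rfl | hik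
  · refine Fin.exists_perm_lt_iff_apply_eq_of_injective ![p, i] ?_ 1 le_rfl
    intro x y
    fin_cases x <;> fin_cases y <;> simp [hpi, hpi.symm]
  · refine Fin.exists_perm_lt_iff_apply_eq_of_injective ![p, i, k] ?_ 2 (by decide)
    intro x y
    fin_cases x <;> fin_cases y <;> simp [hpi, hpi.symm, hpk, hpk.symm, hik, hik.symm]

section DSequence

variable {R σ : Type*} [CommRing R] [Nontrivial R] {n : ℕ}

theorem isDSequence_monomial_iff (e : Fin n → σ →₀ ℕ) :
    IsDSequence (fun i => monomial (e i) (1 : R)) ↔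
      (∀ i j, i ≠ j → ¬monomial (e i) (1 : R) ∣ monomial (e j) 1) ∧
        ∀ i k, i ≤ k → ∀ p < i, ∃ q < i, e q ≤ e p - (e i + e k) + e k := by
  refine and_congr Iff.rfl (forall₂_congr fun i k => imp_congr_right fun _ => ?_)
  have himage : (fun i => monomial (e i) (1 : R)) '' {j | j < i} =
      (fun s => monomial s (1 : R)) '' (e '' {j | j < i}) :=
    (Set.image_image (fun s => monomial s (1 : R)) e _).symm
  rw [monomial_mul, one_mul, himage, colon_span_monomial_add_eq_iff]
  simp only [Set.forall_mem_image, Set.exists_mem_image, Set.mem_ofPred_eq]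

theorem IsDegreeDominated.isDSequence {e : Fin n → σ →₀ ℕ} (h : IsDegreeDominated e)
    (hmin : ∀ i j, i ≠ j → ¬monomial (e i) (1 : R) ∣ monomial (e j) 1) :
    IsDSequence (fun i => monomial (e i) (1 : R)) := by
  refine (isDSequence_monomial_iff e).2 ⟨hmin, fun i k hik p hp => ⟨p, hp, ?_⟩⟩
  rw [Finsupp.le_tsub_add_iff]
  exact h p i k hp.ne (hp.trans_le hik).ne

theorem isDegreeDominated_of_forall_perm {a : Fin n → σ →₀ ℕ}
    (h : ∀ τ : Equiv.Perm (Fin n), IsDSequence (fun i => monomial (a (τ i)) (1 : R))) :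
    IsDegreeDominated a := by
  intro p i k hpi hpk
  obtain ⟨τ, j, K, hjK, hj, hK, hlt⟩ := Fin.exists_perm_lt_iff_apply_eq hpi hpk
  obtain ⟨q, hq, hle⟩ := ((isDSequence_monomial_iff _).1 (h τ)).2 j K hjK (τ.symm p)
    ((hlt _).2 (τ.apply_symm_apply p))
  rwa [(hlt q).1 hq, τ.apply_symm_apply, hj, hK, Finsupp.le_tsub_add_iff] at hle

end DSequence

/-- A minimal monomial sequence `f_1,…,f_n` is an unconditional d-sequence
(every permutation is a d-sequence) iff there exist monomials `d, g_1,…,g_n`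
with `f_i = d·g_i`, `gcd(d,g_i) = 1` for all `i`, and `g_1,…,g_n` pairwise
coprime. -/
theorem stmt_10 {K : Type*} [Field K] {m n : ℕ} (a : Fin n → (Fin m →₀ ℕ))
    (f : Fin n → MvPolynomial (Fin m) K) (hf : ∀ i, f i = monomial (a i) 1)
    (hmin : ∀ i j : Fin n, i ≠ j → ¬f i ∣ f j) :
    (∀ σ : Equiv.Perm (Fin n), IsDSequence (f ∘ σ)) ↔
      ∃ (d : Fin m →₀ ℕ) (g : Fin n → (Fin m →₀ ℕ)),
        (∀ i, f i = monomial d 1 * monomial (g i) 1) ∧ (∀ i, d ⊓ g i = 0) ∧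
          ∀ i j : Fin n, i ≠ j → g i ⊓ g j = 0 := by
  have hperm : ∀ τ : Equiv.Perm (Fin n), f ∘ τ = fun i => monomial (a (τ i)) (1 : K) :=
    fun τ => funext fun i => hf (τ i)
  have hfactor : ∀ (d : Fin m →₀ ℕ) (g : Fin n → Fin m →₀ ℕ),
      (∀ i, f i = monomial d 1 * monomial (g i) 1) ↔ ∀ i, a i = d + g i :=
    fun d g => forall_congr' fun i => by
      rw [hf, monomial_mul, one_mul]
      exact (monomial_left_injective one_ne_zero).eq_iff
  simp only [hperm, hfactor]
  constructor
  · exact fun h => (isDegreeDominated_of_forall_perm h).exists_eq_add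
  · rintro ⟨d, g, ha, hdg, hg⟩ τ
    refine ((isDegreeDominated_of_eq_add ha hdg hg).comp τ.injective).isDSequence fun i j hij => ?_
    simpa only [Function.comp_apply, ← hf] using hmin _ _ (τ.injective.ne hij)
end
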